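/- Let A be an Archimedean semiprime f-algebra, a ∈ A bounded quasi-inversion closed setting: if c ≥ 0 is the quasi-inverse of −a² (i.e., −a² + c = −a²·c), then b²·c ≤ b² for every b ∈ A with |a| ≤ |b|, and hence |b|·c ≤ |b|. -/

import Mathlib

/-!  Setting: `A` is a (possibly non-unital) commutative ring which is also a lattice,
with a translation-invariant order (i.e. a lattice-ordered additive group). -/

section Defs

variable (A : Type*) [NonUnitalCommRing A] [Lattice A]
  [CovariantClass A A (· + ·) (· ≤ ·)]

/-- The positive cone is closed under multiplication (lattice-ordered algebra/ring). -/
def MulPos : Prop := ∀ a b : A, 0 ≤ a → 0 ≤ b → 0 ≤ a * b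

/-- The `f`-algebra condition: `a ⊓ b = 0` implies `(a*c) ⊓ b = 0` and `(c*a) ⊓ b = 0`
for every `c ≥ 0`. -/
def FCond : Prop := ∀ a b c : A, a ⊓ b = 0 → 0 ≤ c → (a * c) ⊓ b = 0 ∧ (c * a) ⊓ b = 0

/-- Semiprime: no nonzero nilpotent elements (for commutative rings this is
equivalent to: squares vanish only at `0`). -/
def Semiprime : Prop := ∀ a : A, a * a = 0 → a = 0

/-- The (additive) order on `A` is Archimedean. -/
def ArchOrder : Prop := ∀ x y : A, (∀ n : ℕ, n • x ≤ y) → x ≤ 0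

/-- `b` is a quasi-inverse of `a`. -/
def IsQuasiInverse (a b : A) : Prop := a + b = a * b

/-- `a` is quasi-invertible. -/
def QuasiInvertible (a : A) : Prop := ∃ b : A, a + b = a * b

/-- `A` is bounded quasi-inversion closed. -/
def BddQuasiInvClosed : Prop :=
  ∀ a : A, |a| ≤ |a * a - a| → QuasiInvertible A a

/-- A bounded element: `a² ≤ μ|a|` for some real `μ > 0`. -/
def IsBoundedElem [Module ℝ A] (a : A) : Prop := ∃ μ : ℝ, 0 < μ ∧ a * a ≤ μ • |a|

end Defs

section Aux

variable {A : Type*} [NonUnitalCommRing A] [Lattice A]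
  [CovariantClass A A (· + ·) (· ≤ ·)]

/-- Disjoint elements multiply to zero in an `f`-algebra. -/
lemma aux_disjoint_mul_eq_zero (hf : FCond A) {x y : A} (h : x ⊓ y = 0) : x * y = 0 := by
  have hx0 : 0 ≤ x := h ▸ inf_le_left
  have hy0 : 0 ≤ y := h ▸ inf_le_right
  have h1 : (x * y) ⊓ y = 0 := (hf x y y h hy0).1
  have h1' : y ⊓ (x * y) = 0 := by rw [inf_comm]; exact h1
  have h2 : (y * x) ⊓ (x * y) = 0 := (hf y (x * y) x h1' hx0).1
  rw [mul_comm y x, inf_idem] at h2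
  exact h2

/-- Squares are nonnegative. -/
lemma aux_sq_nonneg (hmul : MulPos A) (hf : FCond A) (b : A) : 0 ≤ b * b := by
  have h1 : b⁺ * b⁻ = 0 := aux_disjoint_mul_eq_zero hf (posPart_inf_negPart_eq_zero b)
  have h2 : b⁻ * b⁺ = 0 := by rw [mul_comm]; exact h1
  have e : (b⁺ - b⁻) * (b⁺ - b⁻) = b⁺ * b⁺ + b⁻ * b⁻ := by
    rw [mul_sub, sub_mul, sub_mul, h1, h2, sub_zero, zero_sub, sub_neg_eq_add]
  have hb2 : b * b = b⁺ * b⁺ + b⁻ * b⁻ := by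
    rw [← e, posPart_sub_negPart]
  rw [hb2]
  exact add_nonneg (hmul _ _ (posPart_nonneg b) (posPart_nonneg b))
    (hmul _ _ (negPart_nonneg b) (negPart_nonneg b))

/-- The key fact: the quasi-inverse `c` of `-a²` acts as a contraction on
nonnegative elements. -/
lemma aux_contraction (hmul : MulPos A) (hf : FCond A) (hsp : Semiprime A)
    {a c : A} (hc0 : 0 ≤ c) (hqi : IsQuasiInverse A (-(a * a)) c)
    {x : A} (hx : 0 ≤ x) : c * x ≤ x := by
  -- from the quasi-inverse equation: (a*a)*(c*x) = (a*a)*x - c*x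
  have h1 : (-(a * a) + c) * x = (-(a * a) * c) * x := by
    rw [IsQuasiInverse] at hqi; rw [hqi]
  have h2 : -((a * a) * x) + c * x = -((a * a) * (c * x)) := by
    rw [add_mul, neg_mul, neg_mul, neg_mul, mul_assoc (a * a) c x] at h1
    exact h1
  have h2' : (a * a) * (c * x) = (a * a) * x - c * x := by
    rw [← neg_inj, ← h2]; abel
  have key : (c * x - x) + (a * a) * (c * x - x) = -x := by
    rw [mul_sub, h2']; abel
  set w := c * x - x with hw
  have hdisj : w⁺ * w⁻ = 0 :=
    aux_disjoint_mul_eq_zero hf (posPart_inf_negPart_eq_zero w)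
  have hww : w⁺ * w = w⁺ * w⁺ := by
    have e : w⁺ * w = w⁺ * (w⁺ - w⁻) := by rw [posPart_sub_negPart]
    rw [e, mul_sub, hdisj, sub_zero]
  have h4 : w⁺ * w⁺ + (a * a) * (w⁺ * w⁺) = -(w⁺ * x) := by
    have h := congrArg (fun t => w⁺ * t) key
    simp only [mul_add, mul_neg] at h
    rw [mul_left_comm w⁺ (a * a) w, hww] at h
    exact h
  have hs0 : 0 ≤ w⁺ * w⁺ := hmul _ _ (posPart_nonneg w) (posPart_nonneg w)
  have hu0 : 0 ≤ a * a := aux_sq_nonneg hmul hf a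
  have hus : 0 ≤ (a * a) * (w⁺ * w⁺) := hmul _ _ hu0 hs0
  have hxw : 0 ≤ w⁺ * x := hmul _ _ (posPart_nonneg w) hx
  have hneg : -(w⁺ * x) ≤ 0 := by
    have h := add_le_add_left hxw (-(w⁺ * x))
    simpa using h
  have hle : w⁺ * w⁺ ≤ 0 := by
    calc w⁺ * w⁺ ≤ w⁺ * w⁺ + (a * a) * (w⁺ * w⁺) := le_add_of_nonneg_right hus
      _ = -(w⁺ * x) := h4
      _ ≤ 0 := hneg
  have hwp : w⁺ = 0 := hsp _ (le_antisymm hle hs0)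
  have hwle : w ≤ 0 := hwp ▸ le_posPart w
  have h5 := add_le_add_left hwle x
  rw [zero_add, add_comm] at h5
  calc c * x = x + (c * x - x) := by abel
    _ ≤ x := h5

end Aux

/-- If `c ≥ 0` is the quasi-inverse of `-a²`, then `b²c ≤ b²` and `|b|c ≤ |b|`
for every `b` with `|a| ≤ |b|`. -/
theorem sq_mul_quasiInverse_le {A : Type*} [NonUnitalCommRing A] [Lattice A]
    [CovariantClass A A (· + ·) (· ≤ ·)]
    (hmul : MulPos A) (hf : FCond A) (hsp : Semiprime A) (harch : ArchOrder A)
    (a c : A) (hc0 : 0 ≤ c) (hqi : IsQuasiInverse A (-(a * a)) c) :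
    ∀ b : A, |a| ≤ |b| → b * b * c ≤ b * b ∧ |b| * c ≤ |b| := by
  intro b _
  constructor
  · rw [mul_comm]
    exact aux_contraction hmul hf hsp hc0 hqi (aux_sq_nonneg hmul hf b)
  · rw [mul_comm]
    exact aux_contraction hmul hf hsp hc0 hqi (abs_nonneg b)
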